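/- arXiv:1311.3350 — 3 statements merged into one kernel-verified Lean document; each statement's English description precedes it below -/
import Mathlib

section
/- Let (Ω, 𝓕, P) be a probability space and K a positive integer. For each k in a finite index set I of size K₀, let W_{k,1},...,W_{k,K} and U_{1,k},...,U_{K,k} be events such that for each k the events U_{1,k},...,U_{K,k} partition Ω, W_{k,s} is independent of U_{s,k} for all s, and P(W_{k,s}) ≤ sα/K for all s. Then ∑_{k ∈ I} ∑_{s=1}^{K} (1/s) P(W_{k,s} ∩ U_{s,k}) ≤ (K₀/K)α. -/
/-!
Under independence, `P(W ∩ U) = P(W) P(U) ≤ (s α / K) P(U)`, so the `s`-th term of the inner sum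
is at most `(α / K) P(U_{s,k})`. Since the `U_{s,k}` partition `Ω`, the inner sum is at most `α / K`,
and summing over the `K₀` indices `k` gives `(K₀ / K) α`.
-/

open MeasureTheory ProbabilityTheory

section

variable {Ω β : Type*} [MeasurableSpace Ω] {μ : Measure Ω}

lemma measureReal_inter_le_mul_of_indepSet {A B : Set Ω} {b : ℝ} (hAB : IndepSet A B μ)
    (hA : μ.real A ≤ b) : μ.real (A ∩ B) ≤ b * μ.real B := by
  rw [measureReal_def, hAB.measure_inter_eq_mul, ENNReal.toReal_mul]
  exact mul_le_mul_of_nonneg_right hA measureReal_nonneg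

lemma sum_measureReal_eq_one_of_partition [IsProbabilityMeasure μ] {S : Finset β}
    {U : β → Set Ω} (hdisj : (S : Set β).PairwiseDisjoint U) (hmeas : ∀ s ∈ S, MeasurableSet (U s))
    (hcover : ⋃ s ∈ S, U s = Set.univ) : ∑ s ∈ S, μ.real (U s) = 1 := by
  rw [← measureReal_biUnion_finset hdisj hmeas, hcover, probReal_univ]

lemma sum_inv_mul_measureReal_inter_le_of_partition [IsProbabilityMeasure μ] {S : Finset β}
    {U W : β → Set Ω} {g : β → ℝ} {c : ℝ} (hdisj : (S : Set β).PairwiseDisjoint U)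
    (hmeas : ∀ s ∈ S, MeasurableSet (U s)) (hcover : ⋃ s ∈ S, U s = Set.univ)
    (hindep : ∀ s ∈ S, IndepSet (W s) (U s) μ) (hg : ∀ s ∈ S, 0 < g s)
    (hbound : ∀ s ∈ S, μ.real (W s) ≤ g s * c) :
    ∑ s ∈ S, (1 / g s) * μ.real (W s ∩ U s) ≤ c :=
  calc ∑ s ∈ S, (1 / g s) * μ.real (W s ∩ U s)
      ≤ ∑ s ∈ S, c * μ.real (U s) := by
        refine Finset.sum_le_sum fun s hs => ?_
        have hgs := hg s hs
        calc (1 / g s) * μ.real (W s ∩ U s)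
            ≤ (1 / g s) * (g s * c * μ.real (U s)) := by
              gcongr
              exact measureReal_inter_le_mul_of_indepSet (hindep s hs) (hbound s hs)
          _ = c * μ.real (U s) := by field_simp
    _ = c := by rw [← Finset.mul_sum, sum_measureReal_eq_one_of_partition hdisj hmeas hcover, mul_one]

end

theorem stmt11_general {Ω : Type*} [MeasurableSpace Ω] (P : Measure Ω) [IsProbabilityMeasure P]
    {ι : Type*} (I : Finset ι) (K K₀ : ℕ) (hI : I.card = K₀)
    (α : ℝ)
    (W : ι → ℕ → Set Ω) (U : ℕ → ι → Set Ω)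
    (hUMeas : ∀ s k, MeasurableSet (U s k))
    (hpart_disj : ∀ k ∈ I, ∀ s s' : ℕ, 1 ≤ s → s ≤ K → 1 ≤ s' → s' ≤ K → s ≠ s' →
      Disjoint (U s k) (U s' k))
    (hpart_cover : ∀ k ∈ I, (⋃ s ∈ Finset.Icc 1 K, U s k) = Set.univ)
    (hindep : ∀ k ∈ I, ∀ s, 1 ≤ s → s ≤ K → IndepSet (W k s) (U s k) P)
    (hbound : ∀ k ∈ I, ∀ s, 1 ≤ s → s ≤ K → (P (W k s)).toReal ≤ s * α / K) :
    ∑ k ∈ I, ∑ s ∈ Finset.Icc 1 K, (1 / (s : ℝ)) * (P (W k s ∩ U s k)).toReal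
      ≤ ((K₀ : ℝ) / K) * α := by
  have hblock (k : ι) (hk : k ∈ I) :
      ∑ s ∈ Finset.Icc 1 K, (1 / (s : ℝ)) * P.real (W k s ∩ U s k) ≤ α / K := by
    refine sum_inv_mul_measureReal_inter_le_of_partition (fun s hs s' hs' hne => ?_)
      (fun s _ => hUMeas s k) (hpart_cover k hk) (fun s hs => ?_) (fun s hs => ?_) (fun s hs => ?_)
    · simp only [Finset.coe_Icc, Set.mem_Icc] at hs hs'
      exact hpart_disj k hk s s' hs.1 hs.2 hs'.1 hs'.2 hne
    all_goals obtain ⟨hs1, hsK⟩ := Finset.mem_Icc.mp hs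
    · exact hindep k hk s hs1 hsK
    · exact_mod_cast hs1
    · rw [← mul_div_assoc]
      exact hbound k hk s hs1 hsK
  calc ∑ k ∈ I, ∑ s ∈ Finset.Icc 1 K, (1 / (s : ℝ)) * P.real (W k s ∩ U s k)
      ≤ ∑ _k ∈ I, α / K := Finset.sum_le_sum hblock
    _ = ((K₀ : ℝ) / K) * α := by rw [Finset.sum_const, hI, nsmul_eq_mul]; ring

theorem stmt11 {Ω : Type*} [MeasurableSpace Ω] (P : Measure Ω) [IsProbabilityMeasure P]
    {ι : Type*} (I : Finset ι) (K K₀ : ℕ) (hK : 1 ≤ K) (hI : I.card = K₀)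
    (α : ℝ)
    (W : ι → ℕ → Set Ω) (U : ℕ → ι → Set Ω)
    (hWMeas : ∀ k s, MeasurableSet (W k s)) (hUMeas : ∀ s k, MeasurableSet (U s k))
    (hpart_disj : ∀ k ∈ I, ∀ s s' : ℕ, 1 ≤ s → s ≤ K → 1 ≤ s' → s' ≤ K → s ≠ s' →
      Disjoint (U s k) (U s' k))
    (hpart_cover : ∀ k ∈ I, (⋃ s ∈ Finset.Icc 1 K, U s k) = Set.univ)
    (hindep : ∀ k ∈ I, ∀ s, 1 ≤ s → s ≤ K → IndepSet (W k s) (U s k) P)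
    (hbound : ∀ k ∈ I, ∀ s, 1 ≤ s → s ≤ K → (P (W k s)).toReal ≤ s * α / K) :
    ∑ k ∈ I, ∑ s ∈ Finset.Icc 1 K, (1 / (s : ℝ)) * (P (W k s ∩ U s k)).toReal
      ≤ ((K₀ : ℝ) / K) * α :=
  stmt11_general P I K K₀ hI α W U hUMeas hpart_disj hpart_cover hindep hbound
end

section
/- Fix 0 < α < 1, 0 < β ≤ 1 - α, integer K ≥ 1, ρ ≥ 0. The critical values A_s = log(sβ/((1-α_s)K)) - ρ and B_s = log((1-β_s)K/(sα)) + ρ, with α_s = α(K-sβ)/(K(K-β)) and β_s = β(K-sα)/(K(K-α)), satisfy the ordering A_1 ≤ A_2 ≤ ... ≤ A_K and B_K ≤ B_{K-1} ≤ ... ≤ B_1. -/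
/-!
Clearing denominators, both critical values are logarithms of an expression in the single quantity
`g s = K (K - α - β) / s + α β`:
`s β / ((1 - α_s) K) = β (K - β) / g s` and `(1 - β_s) K / (s α) = g s / (α (K - α))`.
Since `α + β ≤ 1 ≤ K`, `g` is decreasing in `s`, so `A_s` increases and `B_s` decreases.
-/

section CriticalValues

variable {𝕜 : Type*} [Field 𝕜] {a b K t : 𝕜}

theorem one_sub_mul_div_mul_eq (hK : K ≠ 0) (hKb : K - b ≠ 0) :
    (1 - a * (K - t * b) / (K * (K - b))) * K = (K * (K - a - b) + a * b * t) / (K - b) := by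
  field_simp
  ring

theorem mul_div_one_sub_mul_div_eq (hK : K ≠ 0) (hKb : K - b ≠ 0) (ht : t ≠ 0) :
    t * b / ((1 - a * (K - t * b) / (K * (K - b))) * K) =
      b * (K - b) / (K * (K - a - b) / t + a * b) := by
  rw [one_sub_mul_div_mul_eq hK hKb, div_add' _ _ _ ht, div_div_eq_mul_div, div_div_eq_mul_div]
  ring

theorem one_sub_mul_div_mul_div_eq (hK : K ≠ 0) (hKa : K - a ≠ 0) (ht : t ≠ 0) (ha : a ≠ 0) :
    (1 - b * (K - t * a) / (K * (K - a))) * K / (t * a) =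
      (K * (K - a - b) / t + a * b) / (a * (K - a)) := by
  rw [one_sub_mul_div_mul_eq hK hKa]
  field_simp
  ring

end CriticalValues

theorem stmt15_general (α β ρ : ℝ) (hα0 : 0 < α) (hβ0 : 0 < β) (hβ1 : β ≤ 1 - α)
    (K : ℕ)
    (αs βs A B : ℕ → ℝ)
    (hαs : ∀ s : ℕ, αs s = α * ((K : ℝ) - s * β) / (K * ((K : ℝ) - β)))
    (hβs : ∀ s : ℕ, βs s = β * ((K : ℝ) - s * α) / (K * ((K : ℝ) - α)))
    (hA : ∀ s : ℕ, A s = Real.log ((s : ℝ) * β / ((1 - αs s) * K)) - ρ)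
    (hB : ∀ s : ℕ, B s = Real.log ((1 - βs s) * K / ((s : ℝ) * α)) + ρ) :
    ∀ s : ℕ, 1 ≤ s → s < K → A s ≤ A (s + 1) ∧ B (s + 1) ≤ B s := by
  intro s hs hsK
  have hs' : (1 : ℝ) ≤ s := by exact_mod_cast hs
  have hsK' : (s : ℝ) + 1 ≤ K := by exact_mod_cast hsK
  have hK : (K : ℝ) ≠ 0 := by linarith
  have hKα : (0 : ℝ) < K - α := by linarith
  have hKβ : (0 : ℝ) < K - β := by linarith
  have hKαβ : 0 ≤ (K : ℝ) * (K - α - β) := by nlinarith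
  set g : ℝ → ℝ := fun u ↦ K * (K - α - β) / u + α * β
  have hA_eq : ∀ u : ℕ, 1 ≤ u → A u = Real.log (β * (K - β) / g u) - ρ := fun u hu ↦ by
    rw [hA, hαs, mul_div_one_sub_mul_div_eq hK hKβ.ne' (by positivity)]
  have hB_eq : ∀ u : ℕ, 1 ≤ u → B u = Real.log (g u / (α * (K - α))) + ρ := fun u hu ↦ by
    rw [hB, hβs, one_sub_mul_div_mul_div_eq hK hKα.ne' (by positivity) hα0.ne']
  have hg_anti : g (s + 1) ≤ g s := by
    simp only [g]
    gcongr
    linarith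
  rw [hA_eq s hs, hA_eq (s + 1) (by omega), hB_eq s hs, hB_eq (s + 1) (by omega), Nat.cast_succ]
  exact ⟨by gcongr, by gcongr⟩

theorem stmt15 (α β ρ : ℝ) (hα0 : 0 < α) (hα1 : α < 1) (hβ0 : 0 < β) (hβ1 : β ≤ 1 - α)
    (K : ℕ) (hK : 1 ≤ K) (hρ : 0 ≤ ρ)
    (αs βs A B : ℕ → ℝ)
    (hαs : ∀ s : ℕ, αs s = α * ((K : ℝ) - s * β) / (K * ((K : ℝ) - β)))
    (hβs : ∀ s : ℕ, βs s = β * ((K : ℝ) - s * α) / (K * ((K : ℝ) - α)))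
    (hA : ∀ s : ℕ, A s = Real.log ((s : ℝ) * β / ((1 - αs s) * K)) - ρ)
    (hB : ∀ s : ℕ, B s = Real.log ((1 - βs s) * K / ((s : ℝ) * α)) + ρ) :
    ∀ s : ℕ, 1 ≤ s → s < K → A s ≤ A (s + 1) ∧ B (s + 1) ≤ B s :=
  stmt15_general α β ρ hα0 hβ0 hβ1 K αs βs A B hαs hβs hA hB
end

section
/- Let K ≥ 1, and for each k in a finite set I with |I| = K₀ ≤ K, suppose W_{k,1} ⊆ W_{k,2} ⊆ ... ⊆ W_{k,K} are nested events with P(W_{k,ℓ}) ≤ ℓα/K, and U_{1,k},...,U_{K,k} partition the sample space for each k. Then ∑_{k∈I} ∑_{s=1}^{K} (1/s) P(W_{k,s} ∩ U_{s,k}) ≤ (K₀/K) α ∑_{ℓ=1}^{K} 1/ℓ, with no independence assumption. -/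
/-!
Write `w ℓ s` for the probability of `W_{k,ℓ} ∩ U_{s,k}` (with `w 0 s = 0`). Telescoping in `ℓ`,
the diagonal term `w s s / s` is a sum of the nonnegative increments `w ℓ s - w (ℓ-1) s` over
`ℓ ≤ s`, each divided by `s ≥ ℓ`, so it is at most `∑_ℓ (w ℓ s - w (ℓ-1) s) / ℓ`. Summing over `s`,
the partition `U_{·,k}` turns the increments into `P(W_{k,ℓ}) - P(W_{k,ℓ-1})`, and Abel summation
against the bounds `P(W_{k,ℓ}) ≤ ℓα/K` gives `(α/K) ∑_ℓ 1/ℓ` for each `k`.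
-/

open MeasureTheory Finset

theorem sum_Icc_one_sub_pred {M : Type*} [AddCommGroup M] (g : ℕ → M) (n : ℕ) :
    ∑ ℓ ∈ Icc 1 n, (g ℓ - g (ℓ - 1)) = g n - g 0 := by
  induction n with
  | zero => simp
  | succ n ih => rw [sum_Icc_succ_top (by omega), ih, Nat.add_sub_cancel, sub_add_sub_cancel']

theorem sum_Icc_sub_pred_div_le_mul_harmonic {f : ℕ → ℝ} {c : ℝ} {n : ℕ} (hf0 : f 0 = 0)
    (hf : ∀ ℓ ∈ Icc 1 n, f ℓ ≤ ℓ * c) :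
    ∑ ℓ ∈ Icc 1 n, (f ℓ - f (ℓ - 1)) / ℓ ≤ c * ∑ ℓ ∈ Icc 1 n, 1 / (ℓ : ℝ) := by
  have hfdiv : ∀ ℓ ∈ Icc 1 n, f ℓ / ℓ ≤ c := fun ℓ hℓ =>
    (div_le_iff₀ (by exact_mod_cast (mem_Icc.1 hℓ).1)).2 (mul_comm c ℓ ▸ hf ℓ hℓ)
  -- Abel summation, keeping the boundary term `f m / m` until the end, where `f n / n ≤ c`.
  have partial_le : ∀ m, 1 ≤ m → m ≤ n → ∑ ℓ ∈ Icc 1 m, (f ℓ - f (ℓ - 1)) / ℓ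
      ≤ c * ∑ ℓ ∈ Icc 1 m, 1 / (ℓ : ℝ) - c + f m / m := by
    intro m hm
    induction m, hm using Nat.le_induction with
    | base => simp [hf0]
    | succ m hm ih =>
      intro hmn
      rw [sum_Icc_succ_top (by omega), sum_Icc_succ_top (by omega), Nat.add_sub_cancel]
      have hstep : f m / m + (f (m + 1) - f m) / (m + 1)
          ≤ c * (1 / (m + 1)) + f (m + 1) / (m + 1) :=
        calc f m / m + (f (m + 1) - f m) / (m + 1)
            = f m / m / (m + 1) + f (m + 1) / (m + 1) := by field_simp; ring
          _ ≤ c / (m + 1) + f (m + 1) / (m + 1) := by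
            gcongr
            exact hfdiv m (mem_Icc.2 ⟨hm, by omega⟩)
          _ = c * (1 / (m + 1)) + f (m + 1) / (m + 1) := by ring
      push_cast
      linarith [ih (by omega)]
  obtain rfl | hn := n.eq_zero_or_pos
  · simp
  linarith [partial_le n hn le_rfl, hfdiv n (mem_Icc.2 ⟨hn, le_rfl⟩)]

theorem div_le_sum_Icc_sub_pred_div {g : ℕ → ℝ} {n s : ℕ} (hg0 : g 0 = 0)
    (hg : ∀ ℓ ∈ Icc 1 n, g (ℓ - 1) ≤ g ℓ) (hs : s ≤ n) :
    g s / s ≤ ∑ ℓ ∈ Icc 1 n, (g ℓ - g (ℓ - 1)) / ℓ := by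
  have hinc : ∀ ℓ ∈ Icc 1 n, 0 ≤ g ℓ - g (ℓ - 1) := fun ℓ hℓ => sub_nonneg.2 (hg ℓ hℓ)
  have hsub : Icc 1 s ⊆ Icc 1 n := Icc_subset_Icc_right hs
  calc g s / s = ∑ ℓ ∈ Icc 1 s, (g ℓ - g (ℓ - 1)) / s := by
        rw [← sum_div, sum_Icc_one_sub_pred, hg0, sub_zero]
    _ ≤ ∑ ℓ ∈ Icc 1 s, (g ℓ - g (ℓ - 1)) / ℓ := by
        refine sum_le_sum fun ℓ hℓ => ?_
        obtain ⟨h1ℓ, hℓs⟩ := mem_Icc.1 hℓ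
        exact div_le_div_of_nonneg_left (hinc ℓ (hsub hℓ)) (by exact_mod_cast h1ℓ)
          (by exact_mod_cast hℓs)
    _ ≤ ∑ ℓ ∈ Icc 1 n, (g ℓ - g (ℓ - 1)) / ℓ :=
        sum_le_sum_of_subset_of_nonneg hsub fun ℓ hℓ _ => div_nonneg (hinc ℓ hℓ) ℓ.cast_nonneg

theorem sum_Icc_diag_div_le_mul_harmonic {w : ℕ → ℕ → ℝ} {c : ℝ} {n : ℕ}
    (hw0 : ∀ s, w 0 s = 0) (hw : ∀ s ∈ Icc 1 n, ∀ ℓ ∈ Icc 1 n, w (ℓ - 1) s ≤ w ℓ s)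
    (hrow : ∀ ℓ ∈ Icc 1 n, ∑ s ∈ Icc 1 n, w ℓ s ≤ ℓ * c) :
    ∑ s ∈ Icc 1 n, w s s / s ≤ c * ∑ ℓ ∈ Icc 1 n, 1 / (ℓ : ℝ) := by
  calc ∑ s ∈ Icc 1 n, w s s / s
      ≤ ∑ s ∈ Icc 1 n, ∑ ℓ ∈ Icc 1 n, (w ℓ s - w (ℓ - 1) s) / ℓ :=
        sum_le_sum fun s hs => div_le_sum_Icc_sub_pred_div (g := (w · s)) (hw0 s) (hw s hs)
          (mem_Icc.1 hs).2
    _ = ∑ ℓ ∈ Icc 1 n, (∑ s ∈ Icc 1 n, w ℓ s - ∑ s ∈ Icc 1 n, w (ℓ - 1) s) / ℓ := by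
        rw [sum_comm]
        simp only [← sum_div, sum_sub_distrib]
    _ ≤ c * ∑ ℓ ∈ Icc 1 n, 1 / (ℓ : ℝ) :=
        sum_Icc_sub_pred_div_le_mul_harmonic (by simp [hw0]) hrow

theorem sum_measureReal_inter_of_pairwiseDisjoint {Ω ι : Type*} [MeasurableSpace Ω]
    {μ : Measure Ω} [IsFiniteMeasure μ] {S : Finset ι} {U : ι → Set Ω}
    (hU : ∀ s ∈ S, MeasurableSet (U s)) (hdisj : (S : Set ι).PairwiseDisjoint U)
    (hcover : ⋃ s ∈ S, U s = Set.univ) {A : Set Ω} (hA : MeasurableSet A) :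
    ∑ s ∈ S, μ.real (A ∩ U s) = μ.real A := by
  rw [← measureReal_biUnion_finset (hdisj.mono fun _ => Set.inter_subset_right)
    fun s hs => hA.inter (hU s hs), ← Set.inter_iUnion₂, hcover, Set.inter_univ]

theorem sum_Icc_measureReal_inter_div_le {Ω : Type*} [MeasurableSpace Ω] {μ : Measure Ω}
    [IsFiniteMeasure μ] {n : ℕ} {c : ℝ} {W U : ℕ → Set Ω} (hW : ∀ ℓ, MeasurableSet (W ℓ))
    (hU : ∀ s, MeasurableSet (U s)) (hnested : ∀ ℓ, 1 ≤ ℓ → ℓ < n → W ℓ ⊆ W (ℓ + 1))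
    (hbound : ∀ ℓ ∈ Icc 1 n, μ.real (W ℓ) ≤ ℓ * c)
    (hdisj : (Icc 1 n : Set ℕ).PairwiseDisjoint U) (hcover : ⋃ s ∈ Icc 1 n, U s = Set.univ) :
    ∑ s ∈ Icc 1 n, μ.real (W s ∩ U s) / s ≤ c * ∑ ℓ ∈ Icc 1 n, 1 / (ℓ : ℝ) := by
  let w : ℕ → ℕ → ℝ := fun ℓ s => if ℓ = 0 then 0 else μ.real (W ℓ ∩ U s)
  have hdiag : ∑ s ∈ Icc 1 n, μ.real (W s ∩ U s) / s = ∑ s ∈ Icc 1 n, w s s / s :=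
    sum_congr rfl fun s hs => by simp [w, Nat.one_le_iff_ne_zero.1 (mem_Icc.1 hs).1]
  rw [hdiag]
  refine sum_Icc_diag_div_le_mul_harmonic (fun s => if_pos rfl) (fun s _ ℓ hℓ => ?_)
    fun ℓ hℓ => ?_
  · obtain ⟨h1ℓ, hℓn⟩ := mem_Icc.1 hℓ
    obtain rfl | h2ℓ := h1ℓ.eq_or_lt
    · simp [w, measureReal_nonneg]
    · have hstep : W (ℓ - 1) ⊆ W ℓ := by
        simpa [Nat.sub_add_cancel h1ℓ] using hnested (ℓ - 1) (by omega) (by omega)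
      simp only [w, if_neg (show ℓ - 1 ≠ 0 by omega), if_neg (show ℓ ≠ 0 by omega)]
      exact measureReal_mono (Set.inter_subset_inter_left _ hstep)
  · simp only [w, if_neg (Nat.one_le_iff_ne_zero.1 (mem_Icc.1 hℓ).1)]
    rw [sum_measureReal_inter_of_pairwiseDisjoint (fun s _ => hU s) hdisj hcover (hW ℓ)]
    exact hbound ℓ hℓ

theorem stmt19_general {Ω : Type*} [MeasurableSpace Ω] (P : Measure Ω) [IsProbabilityMeasure P]
    {ι : Type*} (I : Finset ι) (K K₀ : ℕ) (hI : I.card = K₀)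
    (α : ℝ)
    (W : ι → ℕ → Set Ω) (U : ℕ → ι → Set Ω)
    (hWMeas : ∀ k s, MeasurableSet (W k s)) (hUMeas : ∀ s k, MeasurableSet (U s k))
    (hnested : ∀ k ∈ I, ∀ ℓ : ℕ, 1 ≤ ℓ → ℓ < K → W k ℓ ⊆ W k (ℓ + 1))
    (hbound : ∀ k ∈ I, ∀ ℓ : ℕ, 1 ≤ ℓ → ℓ ≤ K → (P (W k ℓ)).toReal ≤ ℓ * α / K)
    (hpart_disj : ∀ k ∈ I, ∀ s s' : ℕ, 1 ≤ s → s ≤ K → 1 ≤ s' → s' ≤ K → s ≠ s' →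
      Disjoint (U s k) (U s' k))
    (hpart_cover : ∀ k ∈ I, (⋃ s ∈ Finset.Icc 1 K, U s k) = Set.univ) :
    ∑ k ∈ I, ∑ s ∈ Finset.Icc 1 K, (1 / (s : ℝ)) * (P (W k s ∩ U s k)).toReal
      ≤ ((K₀ : ℝ) / K) * α * ∑ ℓ ∈ Finset.Icc 1 K, (1 / (ℓ : ℝ)) := by
  have hk : ∀ k ∈ I, ∑ s ∈ Icc 1 K, P.real (W k s ∩ U s k) / s
      ≤ α / K * ∑ ℓ ∈ Icc 1 K, 1 / (ℓ : ℝ) := fun k hk =>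
    sum_Icc_measureReal_inter_div_le (hWMeas k) (hUMeas · k) (hnested k hk)
      (fun ℓ hℓ => by
        rw [← mul_div_assoc]
        exact hbound k hk ℓ (mem_Icc.1 hℓ).1 (mem_Icc.1 hℓ).2)
      (fun s hs s' hs' hne => hpart_disj k hk s s' (mem_Icc.1 hs).1 (mem_Icc.1 hs).2
        (mem_Icc.1 hs').1 (mem_Icc.1 hs').2 hne)
      (hpart_cover k hk)
  simp only [one_div_mul_eq_div]
  calc ∑ k ∈ I, ∑ s ∈ Icc 1 K, P.real (W k s ∩ U s k) / s
      ≤ ∑ _k ∈ I, α / K * ∑ ℓ ∈ Icc 1 K, 1 / (ℓ : ℝ) := sum_le_sum hk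
    _ = (K₀ / K) * α * ∑ ℓ ∈ Icc 1 K, 1 / (ℓ : ℝ) := by
        rw [sum_const, hI, nsmul_eq_mul]
        ring

theorem stmt19 {Ω : Type*} [MeasurableSpace Ω] (P : Measure Ω) [IsProbabilityMeasure P]
    {ι : Type*} (I : Finset ι) (K K₀ : ℕ) (hK : 1 ≤ K) (hI : I.card = K₀) (hK₀K : K₀ ≤ K)
    (α : ℝ)
    (W : ι → ℕ → Set Ω) (U : ℕ → ι → Set Ω)
    (hWMeas : ∀ k s, MeasurableSet (W k s)) (hUMeas : ∀ s k, MeasurableSet (U s k))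
    (hnested : ∀ k ∈ I, ∀ ℓ : ℕ, 1 ≤ ℓ → ℓ < K → W k ℓ ⊆ W k (ℓ + 1))
    (hbound : ∀ k ∈ I, ∀ ℓ : ℕ, 1 ≤ ℓ → ℓ ≤ K → (P (W k ℓ)).toReal ≤ ℓ * α / K)
    (hpart_disj : ∀ k ∈ I, ∀ s s' : ℕ, 1 ≤ s → s ≤ K → 1 ≤ s' → s' ≤ K → s ≠ s' →
      Disjoint (U s k) (U s' k))
    (hpart_cover : ∀ k ∈ I, (⋃ s ∈ Finset.Icc 1 K, U s k) = Set.univ) :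
    ∑ k ∈ I, ∑ s ∈ Finset.Icc 1 K, (1 / (s : ℝ)) * (P (W k s ∩ U s k)).toReal
      ≤ ((K₀ : ℝ) / K) * α * ∑ ℓ ∈ Finset.Icc 1 K, (1 / (ℓ : ℝ)) :=
  stmt19_general P I K K₀ hI α W U hWMeas hUMeas hnested hbound hpart_disj hpart_cover
end
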